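/- arXiv:1803.04528 — 4 statements merged into one kernel-verified Lean document; each statement's English description precedes it below -/
import Mathlib

section
/- Let X = [x̲, x̄] ⊆ ℝⁿ be a closed hyperrectangle, let f : ℝⁿ → ℝᵐ be differentiable, and suppose that for each i ∈ {1,…,m} and j ∈ {1,…,n} there are extended reals a_{ij}, b_{ij} ∈ ℝ ∪ {−∞, +∞} with a_{ij} < b_{ij}, (a_{ij}, b_{ij}) ≠ (−∞, +∞), and ∂f_i/∂x_j(x) ∈ (a_{ij}, b_{ij}) for all x ∈ X. Classify each pair (i,j) into one of four (possibly overlapping, fix any valid choice) cases: case 1 if a_{ij} ≥ 0; case 2 if a_{ij} ≤ 0 ≤ b_{ij} and |a_{ij}| ≤ |b_{ij}| (so a_{ij} is finite); case 3 if a_{ij} ≤ 0 ≤ b_{ij} and |a_{ij}| ≥ |b_{ij}| (so b_{ij} is finite); case 4 if b_{ij} ≤ 0. Fix ε > 0 and define g : ℝⁿ × ℝⁿ → ℝᵐ by g_i(x,y) = f_i(z) + (α_i − β_i)ᵀ(x − y), where z_j = x_j in cases 1 and 2 and z_j = y_j in cases 3 and 4, α_{ij} = |a_{ij}| + ε in case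 2 and α_{ij} = 0 otherwise, and β_{ij} = −|b_{ij}| − ε in case 3 and β_{ij} = 0 otherwise. Then g is a decomposition function of f on X; in particular f is mixed monotone on X with respect to the componentwise orders on ℝⁿ and ℝᵐ. -/
/-!
Fix `y` and a component `i`. The map `x ↦ gᵢ(x, y)` is differentiable, and its partial derivative
along `e_k` is `∂ₖfᵢ(z) + αᵢₖ - βᵢₖ` when `z_k = x_k` and `αᵢₖ - βᵢₖ` otherwise; the case
classification makes it nonnegative wherever `z` lies in the box. Symmetrically the partials in `y`
are nonpositive. The box is convex and stable under mixing the coordinates of two of its points, so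
the mean value theorem along segments turns these sign conditions into the monotonicity required of
a decomposition function.
-/

/-- `g` is a decomposition function of `f` on `X` (componentwise orders). -/
def DecompOn {n m : ℕ} (f : (Fin n → ℝ) → Fin m → ℝ)
    (g : (Fin n → ℝ) → (Fin n → ℝ) → Fin m → ℝ) (X : Set (Fin n → ℝ)) : Prop :=
  (∀ x ∈ X, g x x = f x) ∧
  (∀ x₁ ∈ X, ∀ x₂ ∈ X, ∀ y ∈ X, x₁ ≤ x₂ → g x₁ y ≤ g x₂ y) ∧
  (∀ x ∈ X, ∀ y₁ ∈ X, ∀ y₂ ∈ X, y₁ ≤ y₂ → g x y₂ ≤ g x y₁)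

open Set

section Monotone

variable {ι : Type*} [Fintype ι] [DecidableEq ι]

theorem ContinuousLinearMap.apply_nonneg_of_apply_single_nonneg (L : (ι → ℝ) →L[ℝ] ℝ)
    (hL : ∀ j, 0 ≤ L (Pi.single j 1)) {d : ι → ℝ} (hd : 0 ≤ d) : 0 ≤ L d := by
  rw [← Finset.univ_sum_single d, map_sum]
  refine Finset.sum_nonneg fun j _ => ?_
  rw [← mul_one (d j), ← smul_eq_mul, Pi.single_smul', map_smul]
  exact smul_nonneg (hd j) (hL j)

theorem Convex.monotoneOn_of_fderiv_single_nonneg {G : (ι → ℝ) → ℝ} {S : Set (ι → ℝ)}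
    (hS : Convex ℝ S) (hG : ∀ p ∈ S, DifferentiableAt ℝ G p)
    (hG' : ∀ p ∈ S, ∀ j, 0 ≤ fderiv ℝ G p (Pi.single j 1)) : MonotoneOn G S := by
  intro x hx y hy hxy
  have hseg : ∀ t ∈ Icc (0 : ℝ) 1, x + t • (y - x) ∈ S := fun t ht => hS.add_smul_sub_mem hx hy ht
  have hderiv : ∀ t ∈ Icc (0 : ℝ) 1, HasDerivAt (fun t : ℝ => G (x + t • (y - x)))
      (fderiv ℝ G (x + t • (y - x)) (y - x)) t := fun t ht => by
    have hline : HasDerivAt (fun t : ℝ => x + t • (y - x)) (y - x) t := by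
      simpa using ((hasDerivAt_id t).smul_const (y - x)).const_add x
    exact (hG _ (hseg t ht)).hasFDerivAt.comp_hasDerivAt t hline
  have hmono : MonotoneOn (fun t : ℝ => G (x + t • (y - x))) (Icc 0 1) := by
    refine monotoneOn_of_hasDerivWithinAt_nonneg (convex_Icc 0 1)
      (fun t ht => (hderiv t ht).continuousAt.continuousWithinAt)
      (fun t ht => (hderiv t (interior_subset ht)).hasDerivWithinAt) fun t ht => ?_
    exact (fderiv ℝ G _).apply_nonneg_of_apply_single_nonneg
      (hG' _ (hseg t (interior_subset ht))) (sub_nonneg.mpr hxy)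
  simpa using hmono (left_mem_Icc.mpr zero_le_one) (right_mem_Icc.mpr zero_le_one) zero_le_one

theorem Convex.antitoneOn_of_fderiv_single_nonpos {G : (ι → ℝ) → ℝ} {S : Set (ι → ℝ)}
    (hS : Convex ℝ S) (hG : ∀ p ∈ S, DifferentiableAt ℝ G p)
    (hG' : ∀ p ∈ S, ∀ j, fderiv ℝ G p (Pi.single j 1) ≤ 0) : AntitoneOn G S := by
  have := hS.monotoneOn_of_fderiv_single_nonneg (G := -G) (fun p hp => (hG p hp).neg)
    fun p hp j => by simpa [fderiv_neg] using hG' p hp j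
  exact fun x hx y hy hxy => neg_le_neg_iff.mp (this hx hy hxy)

end Monotone

section Select

variable {ι : Type*} (p : ι → Prop) [DecidablePred p]

def selectCLM : (ι → ℝ) →L[ℝ] ι → ℝ :=
  ContinuousLinearMap.pi fun j => if p j then ContinuousLinearMap.proj j else 0

@[simp]
theorem selectCLM_apply (v : ι → ℝ) (j : ι) : selectCLM p v j = if p j then v j else 0 := by
  by_cases hp : p j <;> simp [selectCLM, hp]

theorem selectCLM_single [DecidableEq ι] (k : ι) :
    selectCLM p (Pi.single k 1) = if p k then Pi.single k 1 else 0 := by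
  ext j
  by_cases hp : p k <;> rcases eq_or_ne j k with rfl | hj <;> simp_all

theorem hasFDerivAt_select_left [Fintype ι] (x y : ι → ℝ) :
    HasFDerivAt (fun x j => if p j then x j else y j) (selectCLM p) x := by
  refine hasFDerivAt_pi'' fun j => ?_
  by_cases hp : p j
  · simpa [selectCLM, hp] using hasFDerivAt_apply j x
  · simpa [selectCLM, hp] using hasFDerivAt_const (y j) x

theorem hasFDerivAt_select_right [Fintype ι] (x y : ι → ℝ) :
    HasFDerivAt (fun y j => if p j then x j else y j) (selectCLM (¬p ·)) y := by
  refine hasFDerivAt_pi'' fun j => ?_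
  by_cases hp : p j
  · simpa [selectCLM, hp] using hasFDerivAt_const (x j) y
  · simpa [selectCLM, hp] using hasFDerivAt_apply j y

theorem Set.select_mem_Icc {α : Type*} [Preorder α] {lo hi x y : ι → α} (hx : x ∈ Icc lo hi)
    (hy : y ∈ Icc lo hi) :
    (fun j => if p j then x j else y j) ∈ Icc lo hi :=
  ⟨fun j => by dsimp only; split_ifs; exacts [hx.1 j, hy.1 j],
    fun j => by dsimp only; split_ifs; exacts [hx.2 j, hy.2 j]⟩

end Select

section Partials

variable {ι : Type*} [Fintype ι] (p : ι → Prop) [DecidablePred p] {F : (ι → ℝ) → ℝ}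
  (κ : ι → ℝ) {x y : ι → ℝ}

theorem hasFDerivAt_select_add_linear_left
    (hF : DifferentiableAt ℝ F fun j => if p j then x j else y j) :
    HasFDerivAt (fun x => F (fun j => if p j then x j else y j) + ∑ j, κ j * (x j - y j))
      ((fderiv ℝ F fun j => if p j then x j else y j).comp (selectCLM p) +
        ∑ j, κ j • ContinuousLinearMap.proj j) x :=
  (hF.hasFDerivAt.comp x (hasFDerivAt_select_left p x y)).fun_add <|
    HasFDerivAt.fun_sum (u := Finset.univ) fun j _ =>
      ((hasFDerivAt_apply j x).sub_const (y j)).const_mul (κ j)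

theorem hasFDerivAt_select_add_linear_right
    (hF : DifferentiableAt ℝ F fun j => if p j then x j else y j) :
    HasFDerivAt (fun y => F (fun j => if p j then x j else y j) + ∑ j, κ j * (x j - y j))
      ((fderiv ℝ F fun j => if p j then x j else y j).comp (selectCLM (¬p ·)) -
        ∑ j, κ j • ContinuousLinearMap.proj j) y := by
  refine ((hF.hasFDerivAt.comp y (hasFDerivAt_select_right p x y)).fun_add <|
    HasFDerivAt.fun_sum (u := Finset.univ) fun j _ =>
      ((hasFDerivAt_apply j y).const_sub (x j)).const_mul (κ j)).congr_fderiv ?_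
  simp [sub_eq_add_neg]

variable [DecidableEq ι]

theorem fderiv_select_add_linear_left_single
    (hF : DifferentiableAt ℝ F fun j => if p j then x j else y j) (k : ι) :
    fderiv ℝ (fun x => F (fun j => if p j then x j else y j) + ∑ j, κ j * (x j - y j)) x
        (Pi.single k 1) =
      (if p k then fderiv ℝ F (fun j => if p j then x j else y j) (Pi.single k 1) else 0) +
        κ k := by
  rw [(hasFDerivAt_select_add_linear_left p κ hF).fderiv]
  by_cases hp : p k <;> simp [selectCLM_single, hp, Pi.single_apply]

theorem fderiv_select_add_linear_right_single
    (hF : DifferentiableAt ℝ F fun j => if p j then x j else y j) (k : ι) :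
    fderiv ℝ (fun y => F (fun j => if p j then x j else y j) + ∑ j, κ j * (x j - y j)) y
        (Pi.single k 1) =
      (if p k then 0 else fderiv ℝ F (fun j => if p j then x j else y j) (Pi.single k 1)) -
        κ k := by
  rw [(hasFDerivAt_select_add_linear_right p κ hF).fderiv]
  by_cases hp : p k <;> simp [selectCLM_single, hp, Pi.single_apply]

end Partials

theorem decompOn_select_add_linear {n m : ℕ} {xlo xhi : Fin n → ℝ}
    {f : (Fin n → ℝ) → Fin m → ℝ} (hf : Differentiable ℝ f) (p : Fin m → Fin n → Prop)
    [∀ i, DecidablePred (p i)] (κ : Fin m → Fin n → ℝ)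
    (hleft : ∀ i k, ∀ z ∈ Icc xlo xhi,
      0 ≤ (if p i k then fderiv ℝ f z (Pi.single k 1) i else 0) + κ i k)
    (hright : ∀ i k, ∀ z ∈ Icc xlo xhi,
      (if p i k then 0 else fderiv ℝ f z (Pi.single k 1) i) - κ i k ≤ 0) :
    DecompOn f (fun x y i => f (fun j => if p i j then x j else y j) i +
      ∑ j, κ i j * (x j - y j)) (Icc xlo xhi) := by
  have hfi : ∀ i z, HasFDerivAt (fun z => f z i)
      ((ContinuousLinearMap.proj i).comp (fderiv ℝ f z)) z :=
    fun i z => hasFDerivAt_pi'.mp (hf z).hasFDerivAt i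
  refine ⟨fun x _ => by simp, fun x₁ hx₁ x₂ hx₂ y hy hle i => ?_,
    fun x hx y₁ hy₁ y₂ hy₂ hle i => ?_⟩
  · refine (convex_Icc xlo xhi).monotoneOn_of_fderiv_single_nonneg (fun x _ =>
      (hasFDerivAt_select_add_linear_left (p i) (κ i) (hfi i _).differentiableAt).differentiableAt)
      (fun x hx k => ?_) hx₁ hx₂ hle
    rw [fderiv_select_add_linear_left_single (p i) (κ i) (hfi i _).differentiableAt,
      (hfi i _).fderiv]
    exact hleft i k _ (select_mem_Icc (p i) hx hy)
  · refine (convex_Icc xlo xhi).antitoneOn_of_fderiv_single_nonpos (fun y _ =>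
      (hasFDerivAt_select_add_linear_right (p i) (κ i) (hfi i _).differentiableAt).differentiableAt)
      (fun y hy k => ?_) hy₁ hy₂ hle
    rw [fderiv_select_add_linear_right_single (p i) (κ i) (hfi i _).differentiableAt,
      (hfi i _).fderiv]
    exact hright i k _ (select_mem_Icc (p i) hx hy)

/-- The paper's `αᵢⱼ - βᵢⱼ`, where `c = k` encodes the paper's case `k + 1`. -/
def correctionSlope (a b : EReal) (c : Fin 4) (ε : ℝ) : ℝ :=
  (if c = 1 then |a.toReal| + ε else 0) - (if c = 2 then -|b.toReal| - ε else 0)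

theorem ite_add_correctionSlope_nonneg {a b : EReal} {d ε : ℝ} (hε : 0 ≤ ε) (hd : a < d)
    (hab : ¬(a = ⊥ ∧ b = ⊤)) (c : Fin 4) (h0 : c = 0 → 0 ≤ a) (h1 : c = 1 → -a ≤ b) :
    0 ≤ (if c = 0 ∨ c = 1 then d else 0) + correctionSlope a b c ε := by
  fin_cases c
  · simpa [correctionSlope] using (EReal.coe_pos.mp ((h0 rfl).trans_lt hd)).le
  · have ha : a ≠ ⊥ := by
      rintro rfl
      exact hab ⟨rfl, by simpa using h1 rfl⟩
    have had : a.toReal < d := EReal.coe_lt_coe_iff.mp ((EReal.coe_toReal_le ha).trans_lt hd)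
    have : 0 ≤ d + (|a.toReal| + ε) := by linarith [neg_abs_le a.toReal]
    simpa [correctionSlope] using this
  · simpa [correctionSlope] using add_nonneg hε (abs_nonneg b.toReal)
  · simp [correctionSlope]

theorem ite_sub_correctionSlope_nonpos {a b : EReal} {d ε : ℝ} (hε : 0 ≤ ε) (hd : d < b)
    (hab : ¬(a = ⊥ ∧ b = ⊤)) (c : Fin 4) (h2 : c = 2 → b ≤ -a) (h3 : c = 3 → b ≤ 0) :
    (if c = 0 ∨ c = 1 then 0 else d) - correctionSlope a b c ε ≤ 0 := by
  fin_cases c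
  · simp [correctionSlope]
  · simpa [correctionSlope] using (neg_nonpos.mpr hε).trans (abs_nonneg a.toReal)
  · have hb : b ≠ ⊤ := by
      rintro rfl
      exact hab ⟨by simpa using h2 rfl, rfl⟩
    have hdb : d < b.toReal := EReal.coe_lt_coe_iff.mp (hd.trans_le (EReal.le_coe_toReal hb))
    have : d ≤ ε + |b.toReal| := by linarith [le_abs_self b.toReal]
    simpa [correctionSlope] using this
  · simpa [correctionSlope] using (EReal.coe_neg'.mp (hd.trans_le (h3 rfl))).le

theorem mixed_monotone_of_bounded_partials_general {n m : ℕ} (xlo xhi : Fin n → ℝ)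
    (f : (Fin n → ℝ) → Fin m → ℝ) (hf : Differentiable ℝ f)
    (a b : Fin m → Fin n → EReal)
    (hnot_all : ∀ i j, ¬(a i j = ⊥ ∧ b i j = ⊤))
    (hbound : ∀ i j, ∀ x ∈ Set.Icc xlo xhi,
      ((fderiv ℝ f x (Pi.single j 1) i : ℝ) : EReal) ∈ Set.Ioo (a i j) (b i j))
    -- a fixed valid classification of each pair (i,j) into one of the four cases
    (c : Fin m → Fin n → Fin 4)
    (hcase : ∀ i j,
      (c i j = 0 → 0 ≤ a i j) ∧
      (c i j = 1 → a i j ≤ 0 ∧ 0 ≤ b i j ∧ -(a i j) ≤ b i j) ∧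
      (c i j = 2 → a i j ≤ 0 ∧ 0 ≤ b i j ∧ b i j ≤ -(a i j)) ∧
      (c i j = 3 → b i j ≤ 0))
    (ε : ℝ) (hε : 0 < ε) :
    DecompOn f
      (fun x y i =>
        f (fun j => if c i j = 0 ∨ c i j = 1 then x j else y j) i +
          ∑ j : Fin n,
            ((if c i j = 1 then |(a i j).toReal| + ε else 0) -
              (if c i j = 2 then -|(b i j).toReal| - ε else 0)) * (x j - y j))
      (Set.Icc xlo xhi) ∧
    ∃ g, DecompOn f g (Set.Icc xlo xhi) := by
  have hdecomp := decompOn_select_add_linear hf (fun i j => c i j = 0 ∨ c i j = 1)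
    (fun i j => correctionSlope (a i j) (b i j) (c i j) ε)
    (fun i k z hz => ite_add_correctionSlope_nonneg hε.le (hbound i k z hz).1 (hnot_all i k)
      (c i k) (hcase i k).1 fun h => ((hcase i k).2.1 h).2.2)
    (fun i k z hz => ite_sub_correctionSlope_nonpos hε.le (hbound i k z hz).2 (hnot_all i k)
      (c i k) (fun h => ((hcase i k).2.2.1 h).2.2) (hcase i k).2.2.2)
  exact ⟨hdecomp, _, hdecomp⟩

/-- a differentiable function whose partial derivatives on the hyperrectangle
`X = [x̲, x̄]` lie in intervals `(aᵢⱼ, bᵢⱼ)` (with extended-real endpoints, not both infinite)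
is mixed monotone on `X`, with the explicit decomposition function
`gᵢ(x,y) = fᵢ(z) + (αᵢ - βᵢ)ᵀ(x - y)` built from a case classification of the pairs `(i,j)`. -/
theorem mixed_monotone_of_bounded_partials {n m : ℕ} (xlo xhi : Fin n → ℝ)
    (f : (Fin n → ℝ) → Fin m → ℝ) (hf : Differentiable ℝ f)
    (a b : Fin m → Fin n → EReal)
    (hab : ∀ i j, a i j < b i j)
    (hnot_all : ∀ i j, ¬(a i j = ⊥ ∧ b i j = ⊤))
    (hbound : ∀ i j, ∀ x ∈ Set.Icc xlo xhi,
      ((fderiv ℝ f x (Pi.single j 1) i : ℝ) : EReal) ∈ Set.Ioo (a i j) (b i j))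
    -- a fixed valid classification of each pair (i,j) into one of the four cases
    (c : Fin m → Fin n → Fin 4)
    (hcase : ∀ i j,
      (c i j = 0 → 0 ≤ a i j) ∧
      (c i j = 1 → a i j ≤ 0 ∧ 0 ≤ b i j ∧ -(a i j) ≤ b i j) ∧
      (c i j = 2 → a i j ≤ 0 ∧ 0 ≤ b i j ∧ b i j ≤ -(a i j)) ∧
      (c i j = 3 → b i j ≤ 0))
    (ε : ℝ) (hε : 0 < ε) :
    DecompOn f
      (fun x y i =>
        f (fun j => if c i j = 0 ∨ c i j = 1 then x j else y j) i +
          ∑ j : Fin n,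
            ((if c i j = 1 then |(a i j).toReal| + ε else 0) -
              (if c i j = 2 then -|(b i j).toReal| - ε else 0)) * (x j - y j))
      (Set.Icc xlo xhi) ∧
    ∃ g, DecompOn f g (Set.Icc xlo xhi) :=
  mixed_monotone_of_bounded_partials_general xlo xhi f hf a b hnot_all hbound c hcase ε hε
end

section
/- Let X = [x̲, x̄] ⊆ ℝⁿ be a closed hyperrectangle and let f : ℝⁿ → ℝᵐ be differentiable with sign-stable partial derivatives on X, i.e., for each pair (i,j), either ∂f_i/∂x_j(x) ≥ 0 for all x ∈ X, or ∂f_i/∂x_j(x) ≤ 0 for all x ∈ X. Define g : ℝⁿ × ℝⁿ → ℝᵐ by g_i(x,y) = f_i(z), where z_j = x_j if ∂f_i/∂x_j ≥ 0 on X and z_j = y_j if ∂f_i/∂x_j ≤ 0 on X. Then g is a decomposition function of f on X, and hence f is mixed monotone on X with respect to the componentwise orders. -/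
/-!
By the mean value theorem on the segment from `a` to `b`, `fᵢ b - fᵢ a` is
`∑ⱼ (bⱼ - aⱼ) ∂ⱼfᵢ(z)` for some `z` in the box. Moving only the coordinates `j` with
`∂ⱼfᵢ ≥ 0` upward, or only those with `∂ⱼfᵢ ≤ 0` downward, makes every term nonnegative.
-/

open Set

lemma ContinuousLinearMap.nonneg_apply_of_mul_apply_single_nonneg {ι : Type*} [Fintype ι]
    [DecidableEq ι] (L : (ι → ℝ) →L[ℝ] ℝ) {v : ι → ℝ}
    (hv : ∀ j, 0 ≤ v j * L (Pi.single j 1)) : 0 ≤ L v := by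
  rw [pi_eq_sum_univ' v, map_sum]
  exact Finset.sum_nonneg fun j _ => by simpa only [map_smul, smul_eq_mul] using hv j

lemma Convex.le_of_fderiv_apply_sub_nonneg {E : Type*} [NormedAddCommGroup E] [NormedSpace ℝ E]
    {φ : E → ℝ} {s : Set E} (hs : Convex ℝ s) (hφ : ∀ x ∈ s, DifferentiableAt ℝ φ x)
    {a b : E} (ha : a ∈ s) (hb : b ∈ s) (h : ∀ x ∈ s, 0 ≤ fderiv ℝ φ x (b - a)) : φ a ≤ φ b := by
  obtain ⟨z, hz, hzab⟩ :=
    domain_mvt (fun x hx => (hφ x hx).hasFDerivAt.hasFDerivWithinAt) hs ha hb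
  have hz_nonneg := h z (hs.segment_subset ha hb hz)
  linarith

lemma Convex.le_of_partial_mul_nonneg {ι : Type*} [Fintype ι] [DecidableEq ι]
    {φ : (ι → ℝ) → ℝ} {s : Set (ι → ℝ)} (hs : Convex ℝ s) (hφ : ∀ x ∈ s, DifferentiableAt ℝ φ x)
    {a b : ι → ℝ} (ha : a ∈ s) (hb : b ∈ s)
    (h : ∀ x ∈ s, ∀ j, 0 ≤ (b j - a j) * fderiv ℝ φ x (Pi.single j 1)) : φ a ≤ φ b :=
  hs.le_of_fderiv_apply_sub_nonneg hφ ha hb fun x hx =>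
    (fderiv ℝ φ x).nonneg_apply_of_mul_apply_single_nonneg (h x hx)

lemma fderiv_apply_apply {E ι : Type*} [NormedAddCommGroup E] [NormedSpace ℝ E] [Fintype ι]
    {f : E → ι → ℝ} {x : E} (hf : DifferentiableAt ℝ f x) (i : ι) (v : E) :
    fderiv ℝ (fun z => f z i) x v = fderiv ℝ f x v i := by
  rw [fderiv_apply hf i]
  rfl

lemma ite_mem_Icc {ι α : Type*} [Preorder α] {lo hi x y : ι → α} (c : ι → Bool)
    (hx : x ∈ Icc lo hi) (hy : y ∈ Icc lo hi) :
    (fun j => if c j then x j else y j) ∈ Icc lo hi := by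
  refine ⟨fun j => ?_, fun j => ?_⟩ <;> dsimp only <;> split
  exacts [hx.1 j, hy.1 j, hx.2 j, hy.2 j]

/-- a differentiable function with sign-stable partial derivatives on the
hyperrectangle `X = [x̲, x̄]` is mixed monotone on `X`, with decomposition function
`gᵢ(x,y) = fᵢ(z)` where `zⱼ = xⱼ` if `∂fᵢ/∂xⱼ ≥ 0` on `X` and `zⱼ = yⱼ` if `∂fᵢ/∂xⱼ ≤ 0`
on `X`. The Boolean `s i j` records the sign choice for the pair `(i,j)`. -/
theorem mixed_monotone_of_sign_stable_partials {n m : ℕ} (xlo xhi : Fin n → ℝ)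
    (f : (Fin n → ℝ) → Fin m → ℝ) (hf : Differentiable ℝ f)
    (s : Fin m → Fin n → Bool)
    (hsign : ∀ i j,
      (s i j = true → ∀ x ∈ Set.Icc xlo xhi, 0 ≤ fderiv ℝ f x (Pi.single j 1) i) ∧
      (s i j = false → ∀ x ∈ Set.Icc xlo xhi, fderiv ℝ f x (Pi.single j 1) i ≤ 0)) :
    DecompOn f (fun x y i => f (fun j => if s i j then x j else y j) i) (Set.Icc xlo xhi) ∧
    ∃ g, DecompOn f g (Set.Icc xlo xhi) := by
  have hfi : ∀ i, ∀ x ∈ Icc xlo xhi, DifferentiableAt ℝ (fun z => f z i) x :=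
    fun i x _ => differentiableAt_pi.1 (hf x) i
  have hdec : DecompOn f (fun x y i => f (fun j => if s i j then x j else y j) i)
      (Icc xlo xhi) := by
    refine ⟨fun x _ => by simp only [ite_self], ?_, ?_⟩
    · intro x₁ hx₁ x₂ hx₂ y hy hx i
      refine (convex_Icc xlo xhi).le_of_partial_mul_nonneg (hfi i) (ite_mem_Icc _ hx₁ hy)
        (ite_mem_Icc _ hx₂ hy) fun z hz j => ?_
      rw [fderiv_apply_apply (hf z)]
      cases hs : s i j
      · simp
      · simpa [hs] using mul_nonneg (sub_nonneg.2 (hx j)) ((hsign i j).1 hs z hz)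
    · intro x hx y₁ hy₁ y₂ hy₂ hy i
      refine (convex_Icc xlo xhi).le_of_partial_mul_nonneg (hfi i) (ite_mem_Icc _ hx hy₂)
        (ite_mem_Icc _ hx hy₁) fun z hz j => ?_
      rw [fderiv_apply_apply (hf z)]
      cases hs : s i j
      · simpa [hs] using
          mul_nonneg_of_nonpos_of_nonpos (sub_nonpos.2 (hy j)) ((hsign i j).2 hs z hz)
      · simp
  exact ⟨hdec, _, hdec⟩
end

section
/- Let f : [x̲, x̄] → ℝ be continuously differentiable. Then g : [x̲, x̄] × [x̲, x̄] → ℝ defined by g(x,y) = f(x) + 2 ∫_y^x |f'(t)| · 𝟙_{f'<0}(t) dt is a decomposition function of f on [x̲, x̄], where 𝟙_{f'<0}(t) = 1 if f'(t) < 0 and 𝟙_{f'<0}(t) = 0 if f'(t) ≥ 0. That is, g(x,x) = f(x) for all x, g is monotonically increasing in x, and g is monotonically decreasing in y. -/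
/-- for `f` continuously differentiable on `[x̲, x̄]` (with derivative `f'`),
the map `g(x,y) = f(x) + 2∫_y^x |f'(t)|·𝟙_{f'<0}(t) dt` is a decomposition function of `f`
on `[x̲, x̄]`: it agrees with `f` on the diagonal, is monotonically increasing in `x`,
and monotonically decreasing in `y`. -/
theorem decomposition_from_negative_part_integral (xlo xhi : ℝ) (hle : xlo ≤ xhi)
    (f f' : ℝ → ℝ)
    (hderiv : ∀ x ∈ Set.Icc xlo xhi, HasDerivWithinAt f (f' x) (Set.Icc xlo xhi) x)
    (hcont : ContinuousOn f' (Set.Icc xlo xhi)) :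
    (∀ x ∈ Set.Icc xlo xhi,
      f x + 2 * ∫ t in x..x, |f' t| * (if f' t < 0 then (1 : ℝ) else 0) = f x) ∧
    (∀ y ∈ Set.Icc xlo xhi,
      MonotoneOn (fun x => f x + 2 * ∫ t in y..x, |f' t| * (if f' t < 0 then (1 : ℝ) else 0))
        (Set.Icc xlo xhi)) ∧
    (∀ x ∈ Set.Icc xlo xhi,
      AntitoneOn (fun y => f x + 2 * ∫ t in y..x, |f' t| * (if f' t < 0 then (1 : ℝ) else 0))
        (Set.Icc xlo xhi)) := by
  -- rewrite integrand as max (-(f' t)) 0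
  have hphi : (fun t => |f' t| * (if f' t < 0 then (1 : ℝ) else 0))
      = fun t => max (-(f' t)) 0 := by
    funext t
    by_cases h : f' t < 0
    · simp [h, abs_of_neg h, max_eq_left (by linarith : (0:ℝ) ≤ -(f' t))]
    · push_neg at h
      simp [not_lt.2 h, max_eq_right (by linarith : -(f' t) ≤ (0:ℝ))]
  have hphicont : ContinuousOn (fun t => max (-(f' t)) 0) (Set.Icc xlo xhi) :=
    fun x hx => ((hcont x hx).neg).max continuousWithinAt_const
  have hphinn : ∀ t, 0 ≤ max (-(f' t)) 0 := fun t => le_max_right _ _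
  -- integrability of φ on subintervals
  have hint : ∀ a ∈ Set.Icc xlo xhi, ∀ b ∈ Set.Icc xlo xhi,
      IntervalIntegrable (fun t => max (-(f' t)) 0) MeasureTheory.volume a b := by
    intro a ha b hb
    exact (hphicont.mono (Set.uIcc_subset_Icc ha hb)).intervalIntegrable
  have hintf' : ∀ a ∈ Set.Icc xlo xhi, ∀ b ∈ Set.Icc xlo xhi,
      IntervalIntegrable f' MeasureTheory.volume a b := by
    intro a ha b hb
    exact (hcont.mono (Set.uIcc_subset_Icc ha hb)).intervalIntegrable
  have hfc : ContinuousOn f (Set.Icc xlo xhi) := fun x hx =>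
    (hderiv x hx).continuousWithinAt
  -- FTC: f b - f a = ∫ f' for a ≤ b in Icc
  have hftc : ∀ a ∈ Set.Icc xlo xhi, ∀ b ∈ Set.Icc xlo xhi, a ≤ b →
      (∫ t in a..b, f' t) = f b - f a := by
    intro a ha b hb hab
    apply intervalIntegral.integral_eq_sub_of_hasDeriv_right_of_le hab
      (hfc.mono (Set.Icc_subset_Icc ha.1 hb.2))
    · intro x hx
      have hx' : x ∈ Set.Ioo xlo xhi :=
        ⟨lt_of_le_of_lt ha.1 hx.1, lt_of_lt_of_le hx.2 hb.2⟩
      exact ((hderiv x (Set.Ioo_subset_Icc_self hx')).hasDerivAt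
        (Icc_mem_nhds hx'.1 hx'.2)).hasDerivWithinAt
    · exact hintf' a ha b hb
  simp only [hphi]
  refine ⟨fun x hx => by simp, ?_, ?_⟩
  · -- monotone in x
    intro y hy
    intro x1 hx1 x2 hx2 h12
    have hsplit : (∫ t in y..x1, max (-(f' t)) 0) + (∫ t in x1..x2, max (-(f' t)) 0)
        = ∫ t in y..x2, max (-(f' t)) 0 :=
      intervalIntegral.integral_add_adjacent_intervals (hint y hy x1 hx1) (hint x1 hx1 x2 hx2)
    have hdiff : f x2 - f x1 = ∫ t in x1..x2, f' t := (hftc x1 hx1 x2 hx2 h12).symm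
    have key : 0 ≤ (f x2 - f x1) + 2 * ∫ t in x1..x2, max (-(f' t)) 0 := by
      rw [hdiff]
      have h2 : (∫ t in x1..x2, f' t) + 2 * (∫ t in x1..x2, max (-(f' t)) 0)
          = ∫ t in x1..x2, (f' t + 2 * max (-(f' t)) 0) := by
        rw [intervalIntegral.integral_add (hintf' x1 hx1 x2 hx2)
          ((hint x1 hx1 x2 hx2).const_mul 2), intervalIntegral.integral_const_mul]
      rw [h2]
      apply intervalIntegral.integral_nonneg h12
      intro u _
      rcases le_or_gt 0 (f' u) with h | h
      · have : max (-(f' u)) 0 = 0 := max_eq_right (by linarith)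
        rw [this]; linarith
      · have : max (-(f' u)) 0 = -(f' u) := max_eq_left (by linarith)
        rw [this]; linarith
    simp only
    rw [← hsplit]
    linarith
  · -- antitone in y
    intro x hx
    intro y1 hy1 y2 hy2 h12
    have hsplit : (∫ t in y1..y2, max (-(f' t)) 0) + (∫ t in y2..x, max (-(f' t)) 0)
        = ∫ t in y1..x, max (-(f' t)) 0 :=
      intervalIntegral.integral_add_adjacent_intervals (hint y1 hy1 y2 hy2) (hint y2 hy2 x hx)
    have hnn : 0 ≤ ∫ t in y1..y2, max (-(f' t)) 0 :=
      intervalIntegral.integral_nonneg h12 (fun u _ => hphinn u)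
    simp only
    rw [← hsplit]
    linarith
end

section
/- Let f : ℝ → ℝᵐ and suppose that for every closed bounded interval I ⊆ ℝ, the restriction of f to I is of bounded variation. Then f is mixed monotone on ℝ with respect to the usual order on ℝ and the componentwise order on ℝᵐ. -/
/-- a function `f : ℝ → ℝᵐ` that is of bounded variation on every closed
bounded interval is mixed monotone on `ℝ` (componentwise order on `ℝᵐ`), i.e. it admits a
decomposition function `g : ℝ × ℝ → ℝᵐ`. -/
theorem mixed_monotone_of_locally_bounded_variation {m : ℕ} (f : ℝ → Fin m → ℝ)
    (hf : ∀ a b : ℝ, a ≤ b → BoundedVariationOn f (Set.Icc a b)) :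
    ∃ g : ℝ → ℝ → Fin m → ℝ,
      (∀ x : ℝ, g x x = f x) ∧
      (∀ y x₁ x₂ : ℝ, x₁ ≤ x₂ → g x₁ y ≤ g x₂ y) ∧
      (∀ x y₁ y₂ : ℝ, y₁ ≤ y₂ → g x y₂ ≤ g x y₁) := by
  have hbv : ∀ a b : ℝ, BoundedVariationOn f (Set.Icc a b) := by
    intro a b
    rcases le_total a b with h | h
    · exact hf a b h
    · exact (hf b a h).mono fun x hx => ⟨le_trans h hx.1, le_trans hx.2 h⟩
  have hlv : ∀ i : Fin m, LocallyBoundedVariationOn (fun x => f x i) Set.univ := by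
    intro i a b _ _
    rw [Set.univ_inter]
    exact (LipschitzWith.eval i).comp_boundedVariationOn (hbv a b)
  choose p q hp hq hpq using fun i => (hlv i).exists_monotoneOn_sub_monotoneOn
  refine ⟨fun x y i => p i x - q i y, ?_, ?_, ?_⟩
  · intro x; funext i
    have := congrFun (hpq i) x
    simpa using this.symm
  · intro y x₁ x₂ h i
    exact sub_le_sub_right (hp i trivial trivial h) _
  · intro x y₁ y₂ h i
    exact sub_le_sub_left (hq i trivial trivial h) _
end
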